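/- For all integers K ≥ 2 and D ≥ 3: (a) evaluating the time-sharing trade-off at load ratio ℓ = (D−1)/D gives 1/(K + (ℓK²D + K)/(ℓKD + 2K − 1)) = (KD + K − 1)/(2K²D); and (b) (D+1)/(2KD) − (KD + K − 1)/(2K²D) = 1/(2K²D) > 0, so the second HetDAPAC scheme's rate (D+1)/(2KD) strictly exceeds the time-shared rate at the same load ratio, with a gain of exactly 1/(2K²D). -/

import Mathlib

/-! At load ratio `ℓ = (D - 1)/D` one has `ℓ D = D - 1`, so the time-sharing rate, whose closed form
is `(ℓKD + 2K - 1) / (2K²(ℓD + 1))`, becomes `(KD + K - 1)/(2K²D)`. Over the common denominator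
`2K²D` the second scheme's rate `(D + 1)/(2KD)` has numerator `KD + K`, one more. -/

section Rates

variable {𝕜 : Type*} [Field 𝕜]

def timeSharingRate (K D ℓ : 𝕜) : 𝕜 :=
  1 / (K + (ℓ * K ^ 2 * D + K) / (ℓ * K * D + 2 * K - 1))

def scheme2Rate (K D : 𝕜) : 𝕜 := (D + 1) / (2 * K * D)

theorem timeSharingRate_eq {K D ℓ : 𝕜} (hden : ℓ * K * D + 2 * K - 1 ≠ 0) :
    timeSharingRate K D ℓ = (ℓ * K * D + 2 * K - 1) / (2 * K ^ 2 * (ℓ * D + 1)) := by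
  rw [timeSharingRate, add_div' _ _ _ hden, one_div_div]
  congr 1
  ring

theorem timeSharingRate_at_scheme2_load {K D : 𝕜} (hD : D ≠ 0) (hden : K * D + K - 1 ≠ 0) :
    timeSharingRate K D ((D - 1) / D) = (K * D + K - 1) / (2 * K ^ 2 * D) := by
  have hℓD : (D - 1) / D * D = D - 1 := div_mul_cancel₀ _ hD
  have hden' : (D - 1) / D * K * D + 2 * K - 1 = K * D + K - 1 := by
    linear_combination K * hℓD
  rw [timeSharingRate_eq (hden'.symm ▸ hden), hden', hℓD, sub_add_cancel]

theorem scheme2Rate_sub_timeSharingRate {K D : 𝕜} (hK : K ≠ 0) (hD : D ≠ 0) :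
    scheme2Rate K D - (K * D + K - 1) / (2 * K ^ 2 * D) = 1 / (2 * K ^ 2 * D) := by
  rw [scheme2Rate]
  field_simp
  ring

end Rates

/-- At load ratio `ℓ = (D−1)/D`, the time-sharing trade-off gives rate
`(KD+K−1)/(2K²D)`, and the second HetDAPAC scheme's rate `(D+1)/(2KD)` exceeds it
by exactly `1/(2K²D) > 0`. -/
theorem scheme2_beats_timesharing (K D : ℕ) (hK : 2 ≤ K) (hD : 3 ≤ D) :
    (1 / ((K : ℚ) + ((((D : ℚ) - 1) / D) * (K : ℚ) ^ 2 * D + K)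
          / ((((D : ℚ) - 1) / D) * (K : ℚ) * D + 2 * K - 1))
      = ((K : ℚ) * D + K - 1) / (2 * (K : ℚ) ^ 2 * D)) ∧
    (((D : ℚ) + 1) / (2 * K * D) - ((K : ℚ) * D + K - 1) / (2 * (K : ℚ) ^ 2 * D)
      = 1 / (2 * (K : ℚ) ^ 2 * D)) ∧
    (0 < 1 / (2 * (K : ℚ) ^ 2 * D)) ∧
    (((K : ℚ) * D + K - 1) / (2 * (K : ℚ) ^ 2 * D) < ((D : ℚ) + 1) / (2 * K * D)) := by
  have hK1 : (1 : ℚ) ≤ K := by exact_mod_cast (by omega : 1 ≤ K)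
  have hD1 : (1 : ℚ) ≤ D := by exact_mod_cast (by omega : 1 ≤ D)
  have hden : (K : ℚ) * D + K - 1 ≠ 0 := by nlinarith
  have hK0 : (K : ℚ) ≠ 0 := (by linarith : (0 : ℚ) < K).ne'
  have hD0 : (D : ℚ) ≠ 0 := (by linarith : (0 : ℚ) < D).ne'
  have gap : scheme2Rate (K : ℚ) D - (K * D + K - 1) / (2 * K ^ 2 * D) = 1 / (2 * K ^ 2 * D) :=
    scheme2Rate_sub_timeSharingRate hK0 hD0
  have gap_pos : (0 : ℚ) < 1 / (2 * K ^ 2 * D) := by positivity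
  exact ⟨timeSharingRate_at_scheme2_load hD0 hden, gap, gap_pos, sub_pos.mp (gap ▸ gap_pos)⟩
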